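/- Let β₁, …, β_k and γ₁, …, γ_m be positive roots in a crystallographic root system such that δ = ∑ β_i + ∑ γ_i is a root. Then {1, …, m} can be partitioned into k subsets {i_{j,1}, …, i_{j,m_j}} (1 ≤ j ≤ k), possibly empty, such that for each j the sum δ_j = β_j + ∑_{l=1}^{m_j} γ_{i_{j,l}} is a root, and ∑_{j=1}^k δ_j = δ. -/

import Mathlib

/-!
If a root `δ` is a sum of positive roots, then `0 < ⟪δ, δ⟫` forces `0 < ⟪δ, α⟫` for some
summand `α`, and `δ - α` is again a root: it is nonzero, being positive under `f`. Peeling off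
summands this way gives an induction on the number of summands. A peeled-off `βⱼ` stays a block
on its own. A peeled-off `γᵢ` must join one of the blocks `δⱼ` formed by induction from the
remaining summands; a second induction shows that if `∑ δⱼ + γᵢ` is a root, then so is some
`δⱼ + γᵢ`: either `⟪δⱼ, γᵢ⟫ < 0` for some `j`, and then `δⱼ + γᵢ` is a root, or the root
`∑ δⱼ + γᵢ` makes an acute angle with some `δⱼ`, which can again be peeled off.
-/

open Finset Function
open scoped RealInnerProductSpace

section Sums

variable {ι κ M : Type*} [DecidableEq κ] [AddCommMonoid M]

theorem sum_add_sum_fiberwise_of_maps_to {s : Finset κ} {t : Finset ι} {part : ι → κ}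
    (h : ∀ i ∈ t, part i ∈ s) (β : κ → M) (γ : ι → M) :
    ∑ j ∈ s, (β j + ∑ i ∈ t with part i = j, γ i) = ∑ j ∈ s, β j + ∑ i ∈ t, γ i := by
  rw [sum_add_distrib, sum_fiberwise_of_maps_to h]

end Sums

section LinearFunctional

variable {ι V : Type*} [AddCommMonoid V] [Module ℝ V] {f : V →ₗ[ℝ] ℝ}

theorem apply_sum_nonneg {s : Finset ι} {x : ι → V} (hx : ∀ i ∈ s, 0 < f (x i)) :
    0 ≤ f (∑ i ∈ s, x i) := by
  rw [map_sum]
  exact sum_nonneg fun i hi => (hx i hi).le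

theorem apply_sum_pos {s : Finset ι} {x : ι → V} (hs : s.Nonempty)
    (hx : ∀ i ∈ s, 0 < f (x i)) : 0 < f (∑ i ∈ s, x i) := by
  rw [map_sum]
  exact sum_pos hx hs

theorem apply_add_sum_pos {x : V} {s : Finset ι} {y : ι → V} (hx : 0 < f x)
    (hy : ∀ i ∈ s, 0 < f (y i)) : 0 < f (x + ∑ i ∈ s, y i) := by
  rw [map_add]
  exact add_pos_of_pos_of_nonneg hx (apply_sum_nonneg hy)

theorem apply_sum_add_pos {s : Finset ι} {x : ι → V} {y : V} (hx : ∀ i ∈ s, 0 < f (x i))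
    (hy : 0 < f y) : 0 < f (∑ i ∈ s, x i + y) :=
  add_comm y _ ▸ apply_add_sum_pos hy hx

end LinearFunctional

theorem exists_inner_pos_of_inner_sum_pos {ι V : Type*} [NormedAddCommGroup V]
    [InnerProductSpace ℝ V] {y : V} {s : Finset ι} {x : ι → V}
    (h : 0 < ⟪y, ∑ i ∈ s, x i⟫) : ∃ i ∈ s, 0 < ⟪y, x i⟫ := by
  rw [inner_sum] at h
  exact exists_lt_of_sum_lt (by simpa using h)

section IsRootPartition

variable {ι κ V : Type*} [DecidableEq κ] [AddCommMonoid V] {Rt : Set V}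

def IsRootPartition (Rt : Set V) (s : Finset κ) (t : Finset ι) (β : κ → V) (γ : ι → V)
    (part : ι → κ) : Prop :=
  (∀ i ∈ t, part i ∈ s) ∧ ∀ j ∈ s, β j + ∑ i ∈ t with part i = j, γ i ∈ Rt

theorem isRootPartition_singleton {j : κ} {t : Finset ι} {β : κ → V} {γ : ι → V}
    (h : β j + ∑ i ∈ t, γ i ∈ Rt) : IsRootPartition Rt {j} t β γ fun _ => j := by
  refine ⟨fun _ _ => mem_singleton_self j, fun j' hj' => ?_⟩
  obtain rfl := mem_singleton.1 hj'
  simpa using h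

namespace IsRootPartition

variable {s : Finset κ} {t : Finset ι} {β : κ → V} {γ : ι → V} {part : ι → κ}

theorem of_erase_left {j : κ} (h : IsRootPartition Rt (s.erase j) t β γ part) (hj : j ∈ s)
    (hβ : β j ∈ Rt) : IsRootPartition Rt s t β γ part := by
  refine ⟨fun i hi => mem_of_mem_erase (h.1 i hi), fun j' hj' => ?_⟩
  rcases eq_or_ne j' j with rfl | hne
  · have hempty : {i ∈ t | part i = j'} = ∅ :=
      filter_false_of_mem fun i hi => ne_of_mem_erase (h.1 i hi)
    simpa [hempty] using hβ
  · exact h.2 j' (mem_erase.2 ⟨hne, hj'⟩)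

theorem update [DecidableEq ι] {i : ι} {j : κ} (h : IsRootPartition Rt s (t.erase i) β γ part)
    (hi : i ∈ t) (hj : j ∈ s) (hroot : β j + ∑ x ∈ t.erase i with part x = j, γ x + γ i ∈ Rt) :
    IsRootPartition Rt s t β γ (Function.update part i j) := by
  have hsum (j' : κ) : ∑ x ∈ t with Function.update part i j x = j', γ x =
      (if j = j' then γ i else 0) + ∑ x ∈ t.erase i with part x = j', γ x := by
    rw [sum_filter, sum_filter, ← add_sum_erase t _ hi, update_self]
    congr 1
    exact sum_congr rfl fun x hx => by rw [update_of_ne (ne_of_mem_erase hx)]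
  refine ⟨fun x hx => ?_, fun j' hj' => ?_⟩
  · rcases eq_or_ne x i with rfl | hne
    · rwa [update_self]
    · rw [update_of_ne hne]
      exact h.1 x (mem_erase.2 ⟨hne, hx⟩)
  · rw [hsum]
    split_ifs with hjj'
    · subst hjj'
      rwa [add_comm (γ i), ← add_assoc]
    · simpa using h.2 j' hj'

end IsRootPartition

end IsRootPartition

section RootSystem

variable {ι κ V : Type*} [NormedAddCommGroup V] [InnerProductSpace ℝ V] {Rt : Set V}
  {f : V →ₗ[ℝ] ℝ}

def positiveRoots (Rt : Set V) (f : V →ₗ[ℝ] ℝ) : Set V := {β ∈ Rt | 0 < f β}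

theorem sum_erase_add_mem_of_inner_pos [DecidableEq ι]
    (hcrys : ∀ β ∈ Rt, ∀ γ ∈ Rt, 0 < (inner ℝ β γ : ℝ) → β - γ ∈ Rt ∨ β - γ = 0)
    {s : Finset ι} {x : ι → V} {y : V} {j : ι} (hj : j ∈ s) (h : ∑ i ∈ s, x i + y ∈ Rt)
    (hxj : x j ∈ Rt) (hinner : 0 < ⟪∑ i ∈ s, x i + y, x j⟫) (hne : ∑ i ∈ s.erase j, x i + y ≠ 0) :
    ∑ i ∈ s.erase j, x i + y ∈ Rt := by
  have hsub := hcrys _ h _ hxj hinner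
  rw [← sum_erase_add _ _ hj, add_right_comm, add_sub_cancel_right] at hsub
  exact hsub.resolve_right hne

theorem add_mem_of_inner_neg (hneg : ∀ β ∈ Rt, -β ∈ Rt)
    (hcrys : ∀ β ∈ Rt, ∀ γ ∈ Rt, 0 < (inner ℝ β γ : ℝ) → β - γ ∈ Rt ∨ β - γ = 0)
    {a b : V} (ha : a ∈ Rt) (hb : b ∈ Rt) (hab : ⟪a, b⟫ < 0) (hne : a + b ≠ 0) :
    a + b ∈ Rt := by
  have hsub := hcrys a ha (-b) (hneg b hb) (by rw [inner_neg_right]; linarith)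
  rw [sub_neg_eq_add] at hsub
  exact hsub.resolve_right hne

theorem exists_add_mem_of_sum_add_mem [DecidableEq κ] (hneg : ∀ β ∈ Rt, -β ∈ Rt)
    (hcrys : ∀ β ∈ Rt, ∀ γ ∈ Rt, 0 < (inner ℝ β γ : ℝ) → β - γ ∈ Rt ∨ β - γ = 0)
    {d : κ → V} {g : V} (hg : g ∈ positiveRoots Rt f) {s : Finset κ} (hs : s.Nonempty)
    (hd : ∀ j ∈ s, d j ∈ positiveRoots Rt f) (h : ∑ j ∈ s, d j + g ∈ Rt) :
    ∃ j ∈ s, d j + g ∈ Rt := by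
  induction hs using Finset.Nonempty.strong_induction with
  | h₀ j => exact ⟨j, mem_singleton_self j, by simpa using h⟩
  | @h₁ s hs ih =>
    by_cases hobtuse : ∃ j ∈ s, ⟪d j, g⟫ < 0
    · obtain ⟨j, hj, hjg⟩ := hobtuse
      refine ⟨j, hj, add_mem_of_inner_neg hneg hcrys (hd j hj).1 hg.1 hjg
        (ne_zero_of_map (f := f) ?_)⟩
      exact (map_add f _ _ ▸ add_pos (hd j hj).2 hg.2).ne'
    push Not at hobtuse
    have hacute : 0 < ⟪∑ j ∈ s, d j + g, ∑ j ∈ s, d j⟫ := by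
      have hsum : 0 < ⟪∑ j ∈ s, d j, ∑ j ∈ s, d j⟫ := real_inner_self_pos.2 <|
        ne_zero_of_map (f := f) (apply_sum_pos hs.nonempty fun j hj => (hd j hj).2).ne'
      have hg_sum : 0 ≤ ⟪g, ∑ j ∈ s, d j⟫ := by
        rw [inner_sum]
        exact sum_nonneg fun j hj => real_inner_comm (d j) g ▸ hobtuse j hj
      rw [inner_add_left]
      linarith
    obtain ⟨j, hj, hinner⟩ := exists_inner_pos_of_inner_sum_pos hacute
    have hrest := sum_erase_add_mem_of_inner_pos hcrys hj h (hd j hj).1 hinner <|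
      ne_zero_of_map (f := f)
        (apply_sum_add_pos (fun x hx => (hd x (mem_of_mem_erase hx)).2) hg.2).ne'
    obtain ⟨l, hl, hlg⟩ := ih (s.erase j) hs.erase_nonempty (erase_ssubset hj)
      (fun x hx => hd x (mem_of_mem_erase hx)) hrest
    exact ⟨l, mem_of_mem_erase hl, hlg⟩

theorem IsRootPartition.exists_of_erase_right [DecidableEq ι] [DecidableEq κ]
    (hneg : ∀ β ∈ Rt, -β ∈ Rt)
    (hcrys : ∀ β ∈ Rt, ∀ γ ∈ Rt, 0 < (inner ℝ β γ : ℝ) → β - γ ∈ Rt ∨ β - γ = 0)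
    {s : Finset κ} {t : Finset ι} {β : κ → V} {γ : ι → V} {part : ι → κ} {i : ι}
    (hpart : IsRootPartition Rt s (t.erase i) β γ part) (hs : s.Nonempty)
    (hβ : ∀ j ∈ s, β j ∈ positiveRoots Rt f) (hγ : ∀ i ∈ t, γ i ∈ positiveRoots Rt f)
    (hi : i ∈ t) (hδ : ∑ j ∈ s, β j + ∑ i ∈ t, γ i ∈ Rt) :
    ∃ part', IsRootPartition Rt s t β γ part' := by
  obtain ⟨j, hj, hroot⟩ := exists_add_mem_of_sum_add_mem (f := f) hneg hcrys
    (d := fun j => β j + ∑ x ∈ t.erase i with part x = j, γ x) (hγ i hi) hs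
    (fun j hj => ⟨hpart.2 j hj, apply_add_sum_pos (hβ j hj).2
      fun x hx => (hγ x (mem_of_mem_erase (mem_filter.1 hx).1)).2⟩)
    (by rwa [sum_add_sum_fiberwise_of_maps_to hpart.1, add_assoc, sum_erase_add _ _ hi])
  exact ⟨_, hpart.update hi hj hroot⟩

theorem exists_isRootPartition [DecidableEq ι] [DecidableEq κ] (hneg : ∀ β ∈ Rt, -β ∈ Rt)
    (hcrys : ∀ β ∈ Rt, ∀ γ ∈ Rt, 0 < (inner ℝ β γ : ℝ) → β - γ ∈ Rt ∨ β - γ = 0)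
    {s : Finset κ} {t : Finset ι} {β : κ → V} {γ : ι → V} (hs : s.Nonempty)
    (hβ : ∀ j ∈ s, β j ∈ positiveRoots Rt f) (hγ : ∀ i ∈ t, γ i ∈ positiveRoots Rt f)
    (hδ : ∑ j ∈ s, β j + ∑ i ∈ t, γ i ∈ Rt) : ∃ part, IsRootPartition Rt s t β γ part := by
  obtain ⟨j, rfl⟩ | hs' := hs.exists_eq_singleton_or_nontrivial
  · exact ⟨fun _ => j, isRootPartition_singleton (by simpa using hδ)⟩
  have hfβ : 0 < f (∑ j ∈ s, β j) := apply_sum_pos hs fun j hj => (hβ j hj).2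
  have hδ_ne : ∑ j ∈ s, β j + ∑ i ∈ t, γ i ≠ 0 :=
    ne_zero_of_map (f := f) (apply_add_sum_pos hfβ fun i hi => (hγ i hi).2).ne'
  have hδ_pos := real_inner_self_pos.2 hδ_ne
  rw [inner_add_right] at hδ_pos
  rcases lt_or_ge 0 ⟪∑ j ∈ s, β j + ∑ i ∈ t, γ i, ∑ i ∈ t, γ i⟫ with hγδ | hγδ
  · obtain ⟨i, hi, hinner⟩ := exists_inner_pos_of_inner_sum_pos hγδ
    rw [add_comm] at hδ hinner
    have hrest := sum_erase_add_mem_of_inner_pos hcrys hi hδ (hγ i hi).1 hinner <|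
      ne_zero_of_map (f := f)
        (apply_sum_add_pos (fun x hx => (hγ x (mem_of_mem_erase hx)).2) hfβ).ne'
    obtain ⟨part, hpart⟩ := exists_isRootPartition hneg hcrys hs hβ
      (fun x hx => hγ x (mem_of_mem_erase hx)) (add_comm _ (∑ j ∈ s, β j) ▸ hrest)
    exact hpart.exists_of_erase_right hneg hcrys hs hβ hγ hi (add_comm _ (∑ j ∈ s, β j) ▸ hδ)
  · obtain ⟨j, hj, hinner⟩ := exists_inner_pos_of_inner_sum_pos (by linarith :
      0 < ⟪∑ j ∈ s, β j + ∑ i ∈ t, γ i, ∑ j ∈ s, β j⟫)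
    have hrest := sum_erase_add_mem_of_inner_pos hcrys hj hδ (hβ j hj).1 hinner <|
      ne_zero_of_map (f := f) (apply_add_sum_pos
        (apply_sum_pos hs'.erase_nonempty fun x hx => (hβ x (mem_of_mem_erase hx)).2)
        fun i hi => (hγ i hi).2).ne'
    obtain ⟨part, hpart⟩ := exists_isRootPartition hneg hcrys hs'.erase_nonempty
      (fun x hx => hβ x (mem_of_mem_erase hx)) hγ hrest
    exact ⟨part, hpart.of_erase_left hj (hβ j hj).1⟩
termination_by #s + #t
decreasing_by
  · have := card_erase_lt_of_mem hi; omega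
  · have := card_erase_lt_of_mem hj; omega

end RootSystem

theorem partition_gammas_among_betas_general {V : Type*} [NormedAddCommGroup V]
    [InnerProductSpace ℝ V]
    (Rt : Set V)
    (hneg : ∀ β ∈ Rt, -β ∈ Rt)
    (hcrys : ∀ β ∈ Rt, ∀ γ ∈ Rt, 0 < (inner ℝ β γ : ℝ) → β - γ ∈ Rt ∨ β - γ = 0)
    (f : V →ₗ[ℝ] ℝ)
    (P : Set V) (hP : P = {β ∈ Rt | 0 < f β})
    (k : ℕ) (hk : 0 < k) (m : ℕ)
    (β : Fin k → V) (hβ : ∀ j, β j ∈ P)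
    (γ : Fin m → V) (hγ : ∀ i, γ i ∈ P)
    (hδ : (∑ j, β j) + ∑ i, γ i ∈ Rt) :
    ∃ part : Fin m → Fin k,
      (∀ j, (β j + ∑ i ∈ Finset.univ.filter (fun i => part i = j), γ i) ∈ Rt) ∧
      (∑ j, (β j + ∑ i ∈ Finset.univ.filter (fun i => part i = j), γ i)) =
        (∑ j, β j) + ∑ i, γ i := by
  subst hP
  obtain ⟨part, hpart⟩ := exists_isRootPartition hneg hcrys (univ_nonempty_iff.2 ⟨⟨0, hk⟩⟩)
    (fun j _ => hβ j) (fun i _ => hγ i) hδ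
  exact ⟨part, fun j => hpart.2 j (mem_univ j), sum_add_sum_fiberwise_of_maps_to hpart.1 β γ⟩

/-- If `β₁, …, β_k` and `γ₁, …, γ_m` are positive roots whose total sum `δ`
is a root, then `{1, …, m}` can be partitioned into `k` (possibly empty) subsets, encoded
by an assignment `part : Fin m → Fin k`, so that each `δⱼ = βⱼ + ∑_{part i = j} γᵢ` is a
root and `∑ⱼ δⱼ = δ`. -/
theorem partition_gammas_among_betas {V : Type*} [NormedAddCommGroup V]
    [InnerProductSpace ℝ V]
    (Rt : Set V) (h0 : (0 : V) ∉ Rt)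
    (hneg : ∀ β ∈ Rt, -β ∈ Rt)
    (hcrys : ∀ β ∈ Rt, ∀ γ ∈ Rt, 0 < (inner ℝ β γ : ℝ) → β - γ ∈ Rt ∨ β - γ = 0)
    (f : V →ₗ[ℝ] ℝ) (hf : ∀ β ∈ Rt, f β ≠ 0)
    (P : Set V) (hP : P = {β ∈ Rt | 0 < f β})
    (k : ℕ) (hk : 0 < k) (m : ℕ)
    (β : Fin k → V) (hβ : ∀ j, β j ∈ P)
    (γ : Fin m → V) (hγ : ∀ i, γ i ∈ P)
    (hδ : (∑ j, β j) + ∑ i, γ i ∈ Rt) :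
    ∃ part : Fin m → Fin k,
      (∀ j, (β j + ∑ i ∈ Finset.univ.filter (fun i => part i = j), γ i) ∈ Rt) ∧
      (∑ j, (β j + ∑ i ∈ Finset.univ.filter (fun i => part i = j), γ i)) =
        (∑ j, β j) + ∑ i, γ i :=
  partition_gammas_among_betas_general Rt hneg hcrys f P hP k hk m β hβ γ hγ hδ
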